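/- arXiv:2602.17992 — 5 statements merged into one kernel-verified Lean document; each statement's English description precedes it below -/
import Mathlib

section
/- Fix M ∈ ℤ_{>0}, ℓ ∈ (0,1), and δ > 0. Let x1 = ⌊ℓ n^{2/3+δ}⌋ - Mn, y1 = -Mn, x2 = ⌊ℓ n^{2/3+δ}⌋ + Mn, y2 = Mn, and let d(a,b;c,e) = (sqrt(c-a+1) + sqrt(e-b+1))^2. Then there exist constants n0 and c0 > 0 such that for all n ≥ n0 and all integers i, j in the interval [⌊ℓ n^{2/3+δ}⌋ - Mn, Mn] with i ≤ j ≤ i + n^{1/3}, one has d(x1,y1;j,j) + d(i,i;x2,y2) ≤ 8Mn - c0 n^{1/3+2δ}. -/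
set_option maxHeartbeats 1000000

/-- The shape function of exponential last passage percolation. -/
noncomputable def shapeFn (x1 y1 x2 y2 : ℤ) : ℝ :=
  (Real.sqrt ((x2 : ℝ) - x1 + 1) + Real.sqrt ((y2 : ℝ) - y1 + 1)) ^ 2

private lemma key_sqrt_bound (a b : ℝ) (ha : 0 ≤ a) (hb : 0 ≤ b) (hab : 0 < a + b) :
    (Real.sqrt a + Real.sqrt b) ^ 2 ≤ 2 * (a + b) - (a - b) ^ 2 / (2 * (a + b)) := by
  have hsa := Real.sq_sqrt ha
  have hsb := Real.sq_sqrt hb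
  have hs : (Real.sqrt a + Real.sqrt b) ^ 2 + (Real.sqrt a - Real.sqrt b) ^ 2 = 2 * (a + b) := by
    nlinarith [hsa, hsb]
  have h1 : (Real.sqrt a - Real.sqrt b) * (Real.sqrt a + Real.sqrt b) = a - b := by
    nlinarith [hsa, hsb]
  have h2 : (Real.sqrt a + Real.sqrt b) ^ 2 ≤ 2 * (a + b) := by
    nlinarith [sq_nonneg (Real.sqrt a - Real.sqrt b)]
  have hd : (a - b) ^ 2 ≤ (Real.sqrt a - Real.sqrt b) ^ 2 * (2 * (a + b)) := by
    calc (a - b) ^ 2 = (Real.sqrt a - Real.sqrt b) ^ 2 * (Real.sqrt a + Real.sqrt b) ^ 2 := by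
          rw [← mul_pow, h1]
      _ ≤ (Real.sqrt a - Real.sqrt b) ^ 2 * (2 * (a + b)) := by
          exact mul_le_mul_of_nonneg_left h2 (sq_nonneg _)
  have hd' : (a - b) ^ 2 / (2 * (a + b)) ≤ (Real.sqrt a - Real.sqrt b) ^ 2 :=
    (div_le_iff₀ (by linarith)).2 hd
  linarith

theorem diag_deficit_two_piece (M : ℤ) (hM : 0 < M) (ℓ δ : ℝ) (hℓ : 0 < ℓ) (hℓ1 : ℓ < 1)
    (hδ : 0 < δ) :
    ∃ (n0 : ℕ) (c0 : ℝ), 0 < c0 ∧ ∀ n : ℕ, n0 ≤ n →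
      ∀ i j : ℤ,
        ⌊ℓ * (n : ℝ) ^ ((2 : ℝ) / 3 + δ)⌋ - M * n ≤ i →
        (j : ℝ) ≤ M * n →
        i ≤ j → (j : ℝ) ≤ (i : ℝ) + (n : ℝ) ^ ((1 : ℝ) / 3) →
        shapeFn (⌊ℓ * (n : ℝ) ^ ((2 : ℝ) / 3 + δ)⌋ - M * n) (-(M * n)) j j +
          shapeFn i i (⌊ℓ * (n : ℝ) ^ ((2 : ℝ) / 3 + δ)⌋ + M * n) (M * n) ≤
          8 * M * n - c0 * (n : ℝ) ^ ((1 : ℝ) / 3 + 2 * δ) := by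
  have hMr : (1 : ℝ) ≤ (M : ℝ) := by exact_mod_cast hM
  have hM0 : (M : ℝ) ≠ 0 := by linarith
  have hN : Filter.Tendsto (fun n : ℕ => (n : ℝ)) Filter.atTop Filter.atTop :=
    tendsto_natCast_atTop_atTop
  have hT1 : Filter.Tendsto (fun n : ℕ => (n : ℝ) ^ ((2 : ℝ) / 3 + δ)) Filter.atTop
      Filter.atTop := (tendsto_rpow_atTop (by linarith)).comp hN
  have hT2 : Filter.Tendsto (fun n : ℕ => (n : ℝ) ^ (2 * δ)) Filter.atTop Filter.atTop :=
    (tendsto_rpow_atTop (by linarith)).comp hN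
  have E1 := hT1.eventually_ge_atTop (2 / ℓ)
  have E2 := hT2.eventually_ge_atTop (480 * (M : ℝ) / ℓ ^ 2)
  have E3 : ∀ᶠ n : ℕ in Filter.atTop, 2 ≤ n := Filter.eventually_ge_atTop 2
  obtain ⟨n0, hn0⟩ := Filter.eventually_atTop.1 (E1.and (E2.and E3))
  refine ⟨n0, ℓ ^ 2 / (40 * (M : ℝ)), by positivity, ?_⟩
  intro n hn i j hi hj hij hji
  obtain ⟨hE1, hE2, hE3⟩ := hn0 n hn
  have hn2 : (2 : ℝ) ≤ (n : ℝ) := by exact_mod_cast hE3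
  have hnpos : (0 : ℝ) < (n : ℝ) := by linarith
  set Lz : ℤ := ⌊ℓ * (n : ℝ) ^ ((2 : ℝ) / 3 + δ)⌋ with hLz
  set Lr : ℝ := (Lz : ℝ) with hLr
  set m : ℝ := (M : ℝ) * (n : ℝ) with hm
  have hm2 : (2 : ℝ) ≤ m := by
    calc (2 : ℝ) ≤ 1 * (n : ℝ) := by linarith
      _ ≤ (M : ℝ) * (n : ℝ) := mul_le_mul_of_nonneg_right hMr (by linarith)
  have hfloor : ℓ * (n : ℝ) ^ ((2 : ℝ) / 3 + δ) - 1 ≤ Lr := by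
    have h := Int.sub_one_lt_floor (ℓ * (n : ℝ) ^ ((2 : ℝ) / 3 + δ))
    rw [hLr, hLz]; linarith only [h]
  have hone : (1 : ℝ) ≤ (ℓ / 2) * (n : ℝ) ^ ((2 : ℝ) / 3 + δ) := by
    have h2 : 2 / ℓ * (ℓ / 2) ≤ (n : ℝ) ^ ((2 : ℝ) / 3 + δ) * (ℓ / 2) :=
      mul_le_mul_of_nonneg_right hE1 (by linarith)
    have h3 : 2 / ℓ * (ℓ / 2) = 1 := by field_simp
    have h4 : (n : ℝ) ^ ((2 : ℝ) / 3 + δ) * (ℓ / 2) = (ℓ / 2) * (n : ℝ) ^ ((2 : ℝ) / 3 + δ) := by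
      ring
    linarith only [h2, h3.symm.le, h3.le, h4.le, h4.ge]
  have hLlow : (ℓ / 2) * (n : ℝ) ^ ((2 : ℝ) / 3 + δ) ≤ Lr := by
    have h5 : ℓ * (n : ℝ) ^ ((2 : ℝ) / 3 + δ) - 1
        = 2 * ((ℓ / 2) * (n : ℝ) ^ ((2 : ℝ) / 3 + δ)) - 1 := by ring
    linarith only [hfloor, hone, h5.le, h5.ge]
  have hLpos : 0 ≤ Lr := le_trans (by positivity) hLlow
  have hiL : Lr - m ≤ (i : ℝ) := by
    have h : ((Lz - M * n : ℤ) : ℝ) ≤ (i : ℝ) := by exact_mod_cast hi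
    push_cast at h; rw [hLr, hm]; linarith only [h]
  have hij' : (i : ℝ) ≤ (j : ℝ) := by exact_mod_cast hij
  have hjm : (j : ℝ) ≤ m := hj
  set A : ℝ := (j : ℝ) - Lr + m + 1 with hA
  set B : ℝ := (j : ℝ) + m + 1 with hB
  set C : ℝ := Lr + m - (i : ℝ) + 1 with hC
  set D : ℝ := m - (i : ℝ) + 1 with hD
  have hA0 : 0 ≤ A := by rw [hA]; linarith only [hij', hiL]
  have hB0 : 0 ≤ B := by rw [hB]; linarith only [hij', hiL, hLpos]
  have hC0 : 0 ≤ C := by rw [hC]; linarith only [hij', hjm, hLpos]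
  have hD0 : 0 ≤ D := by rw [hD]; linarith only [hij', hjm]
  have hABpos : 0 < A + B := by rw [hA, hB]; linarith only [hij', hiL, hLpos]
  have hCDpos : 0 < C + D := by rw [hC, hD]; linarith only [hij', hjm, hLpos]
  have hAB5 : A + B ≤ 5 * m := by rw [hA, hB]; linarith only [hjm, hLpos, hm2]
  have hCD5 : C + D ≤ 5 * m := by rw [hC, hD]; linarith only [hiL, hLpos, hm2]
  have hshape1 : shapeFn (Lz - M * n) (-(M * n)) j j = (Real.sqrt A + Real.sqrt B) ^ 2 := by
    have e1 : ((j : ℤ) : ℝ) - ((Lz - M * (n : ℤ) : ℤ) : ℝ) + 1 = A := by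
      rw [hA, hLr, hm]; push_cast; ring
    have e2 : ((j : ℤ) : ℝ) - ((-(M * (n : ℤ)) : ℤ) : ℝ) + 1 = B := by
      rw [hB, hm]; push_cast; ring
    unfold shapeFn; rw [e1, e2]
  have hshape2 : shapeFn i i (Lz + M * n) (M * n) = (Real.sqrt C + Real.sqrt D) ^ 2 := by
    have e1 : ((Lz + M * (n : ℤ) : ℤ) : ℝ) - ((i : ℤ) : ℝ) + 1 = C := by
      rw [hC, hLr, hm]; push_cast; ring
    have e2 : ((M * (n : ℤ) : ℤ) : ℝ) - ((i : ℤ) : ℝ) + 1 = D := by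
      rw [hD, hm]; push_cast; ring
    unfold shapeFn; rw [e1, e2]
  have k1 := key_sqrt_bound A B hA0 hB0 hABpos
  have k2 := key_sqrt_bound C D hC0 hD0 hCDpos
  have hAmB : (A - B) ^ 2 = Lr ^ 2 := by rw [hA, hB]; ring
  have hCmD : (C - D) ^ 2 = Lr ^ 2 := by rw [hC, hD]; ring
  have hdef1 : Lr ^ 2 / (10 * m) ≤ (A - B) ^ 2 / (2 * (A + B)) := by
    rw [hAmB]
    exact div_le_div_of_nonneg_left (sq_nonneg _) (by linarith only [hABpos])
      (by linarith only [hAB5])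
  have hdef2 : Lr ^ 2 / (10 * m) ≤ (C - D) ^ 2 / (2 * (C + D)) := by
    rw [hCmD]
    exact div_le_div_of_nonneg_left (sq_nonneg _) (by linarith only [hCDpos])
      (by linarith only [hCD5])
  have hrw1 : ((n : ℝ) ^ ((2 : ℝ) / 3 + δ)) ^ 2 = (n : ℝ) * (n : ℝ) ^ ((1 : ℝ) / 3 + 2 * δ) := by
    have he : (2 : ℝ) / 3 + δ + ((2 : ℝ) / 3 + δ) = 1 + ((1 : ℝ) / 3 + 2 * δ) := by ring
    rw [sq, ← Real.rpow_add hnpos, he, Real.rpow_add hnpos, Real.rpow_one]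
  have hrw2 : (n : ℝ) ^ ((1 : ℝ) / 3 + 2 * δ) = (n : ℝ) ^ ((1 : ℝ) / 3) * (n : ℝ) ^ (2 * δ) :=
    Real.rpow_add hnpos _ _
  have h13one : (1 : ℝ) ≤ (n : ℝ) ^ ((1 : ℝ) / 3) :=
    calc (1 : ℝ) = (1 : ℝ) ^ ((1 : ℝ) / 3) := (Real.one_rpow _).symm
      _ ≤ (n : ℝ) ^ ((1 : ℝ) / 3) :=
        Real.rpow_le_rpow (by norm_num) (by linarith) (by norm_num)
  -- L^2 lower bound
  have hLsq : (ℓ ^ 2 / 4) * ((n : ℝ) * (n : ℝ) ^ ((1 : ℝ) / 3 + 2 * δ)) ≤ Lr ^ 2 := by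
    rw [← hrw1]
    have h0 : 0 ≤ (ℓ / 2) * (n : ℝ) ^ ((2 : ℝ) / 3 + δ) := by positivity
    have hmul := mul_le_mul hLlow hLlow h0 (le_trans h0 hLlow)
    have he : (ℓ ^ 2 / 4) * ((n : ℝ) ^ ((2 : ℝ) / 3 + δ)) ^ 2
        = ((ℓ / 2) * (n : ℝ) ^ ((2 : ℝ) / 3 + δ)) * ((ℓ / 2) * (n : ℝ) ^ ((2 : ℝ) / 3 + δ)) := by
      ring
    have he2 : Lr ^ 2 = Lr * Lr := sq Lr
    linarith only [hmul, he.le, he.ge, he2.le, he2.ge]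
  have hmpos : (0 : ℝ) < m := by linarith only [hm2]
  have hdef : (ℓ ^ 2 / (40 * (M : ℝ))) * (n : ℝ) ^ ((1 : ℝ) / 3 + 2 * δ)
      ≤ Lr ^ 2 / (10 * m) := by
    rw [le_div_iff₀ (by linarith only [hmpos] : (0 : ℝ) < 10 * m)]
    have he : (ℓ ^ 2 / (40 * (M : ℝ))) * (n : ℝ) ^ ((1 : ℝ) / 3 + 2 * δ)
        * (10 * ((M : ℝ) * (n : ℝ)))
        = (ℓ ^ 2 / 4) * ((n : ℝ) * (n : ℝ) ^ ((1 : ℝ) / 3 + 2 * δ)) := by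
      field_simp; ring
    rw [hm, he]; exact hLsq
  have hsmall : 4 * (n : ℝ) ^ ((1 : ℝ) / 3) + 8
      ≤ (ℓ ^ 2 / (40 * (M : ℝ))) * (n : ℝ) ^ ((1 : ℝ) / 3 + 2 * δ) := by
    rw [hrw2]
    have h1 : 4 * (n : ℝ) ^ ((1 : ℝ) / 3) + 8 ≤ 12 * (n : ℝ) ^ ((1 : ℝ) / 3) := by
      linarith only [h13one]
    have hc : (12 : ℝ) ≤ (ℓ ^ 2 / (40 * (M : ℝ))) * (n : ℝ) ^ (2 * δ) := by
      have hpos : (0 : ℝ) < ℓ ^ 2 / (40 * (M : ℝ)) := by positivity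
      have h5 := mul_le_mul_of_nonneg_left hE2 hpos.le
      have h6 : (ℓ ^ 2 / (40 * (M : ℝ))) * (480 * (M : ℝ) / ℓ ^ 2) = 12 := by
        field_simp; ring
      linarith only [h5, h6.le, h6.ge]
    have h2 : (12 : ℝ) * (n : ℝ) ^ ((1 : ℝ) / 3)
        ≤ (ℓ ^ 2 / (40 * (M : ℝ))) * ((n : ℝ) ^ ((1 : ℝ) / 3) * (n : ℝ) ^ (2 * δ)) := by
      have := mul_le_mul_of_nonneg_right hc (by positivity : (0 : ℝ) ≤ (n : ℝ) ^ ((1 : ℝ) / 3))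
      calc (12 : ℝ) * (n : ℝ) ^ ((1 : ℝ) / 3)
          ≤ ((ℓ ^ 2 / (40 * (M : ℝ))) * (n : ℝ) ^ (2 * δ)) * (n : ℝ) ^ ((1 : ℝ) / 3) := this
        _ = _ := by ring
    linarith only [h1, h2]
  have hsum : 2 * (A + B) + 2 * (C + D) ≤ 4 * (n : ℝ) ^ ((1 : ℝ) / 3) + 8 * m + 8 := by
    rw [hA, hB, hC, hD]; linarith only [hji]
  rw [hshape1, hshape2]
  have hfinal : (Real.sqrt A + Real.sqrt B) ^ 2 + (Real.sqrt C + Real.sqrt D) ^ 2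
      ≤ 4 * (n : ℝ) ^ ((1 : ℝ) / 3) + 8 * m + 8 - 2 * (Lr ^ 2 / (10 * m)) := by
    linarith only [k1, k2, hdef1, hdef2, hsum]
  have h8 : 8 * (M : ℝ) * (n : ℝ) = 8 * m := by rw [hm]; ring
  rw [h8]
  linarith only [hfinal, hdef, hsmall]
end

section
/- Fix M ∈ ℤ_{>0}, ℓ ∈ (0,1), δ > 0. With x1 = ⌊ℓ n^{2/3+δ}⌋ - Mn, y1 = -Mn, x2 = ⌊ℓ n^{2/3+δ}⌋ + Mn, y2 = Mn and d the shape function as before, there exist n0 and c1 > 0 such that for all n ≥ n0 and integers i ≤ j ≤ s ≤ t in [⌊ℓ n^{2/3+δ}⌋ - Mn, Mn] with t ≤ s + n^{1/3} and j ≤ i + n^{1/3}, one has d(x1,y1;j,j) + d(i,i;t,t) + d(s,s;x2,y2) ≤ 8Mn - c1 n^{1/3+2δ}. -/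
set_option maxHeartbeats 1000000


lemma sqrt_sum_sq_le (a b : ℝ) (ha : 0 ≤ a) (hb : 0 ≤ b) :
    (Real.sqrt a + Real.sqrt b) ^ 2 ≤ 2 * (a + b) := by
  have hua := Real.sq_sqrt ha
  have hub := Real.sq_sqrt hb
  nlinarith [sq_nonneg (Real.sqrt a - Real.sqrt b)]

lemma sqrt_sum_sq_le' (a b S : ℝ) (ha : 0 ≤ a) (hb : 0 ≤ b) (hS : a + b ≤ S) (hS0 : 0 < S) :
    (Real.sqrt a + Real.sqrt b) ^ 2 ≤ 2 * (a + b) - (a - b) ^ 2 / (2 * S) := by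
  set u := Real.sqrt a with hu
  set v := Real.sqrt b with hv
  have hua : u ^ 2 = a := Real.sq_sqrt ha
  have hub : v ^ 2 = b := Real.sq_sqrt hb
  have hu0 : 0 ≤ u := Real.sqrt_nonneg a
  have hv0 : 0 ≤ v := Real.sqrt_nonneg b
  have h2S : (0:ℝ) < 2 * S := by linarith
  have h1 : (u + v) ^ 2 ≤ 2 * S := by nlinarith [sq_nonneg (u - v)]
  have key : (a - b) ^ 2 ≤ (2 * (a + b) - (u + v) ^ 2) * (2 * S) := by
    have h2 : (2 * (a + b) - (u + v) ^ 2) = (u - v) ^ 2 := by nlinarith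
    rw [h2]
    have h3 : (a - b) ^ 2 = (u - v) ^ 2 * (u + v) ^ 2 := by nlinarith
    rw [h3]
    exact mul_le_mul_of_nonneg_left h1 (sq_nonneg _)
  have := (div_le_iff₀ h2S).mpr key
  linarith

lemma shapeFn_le_two_mul (x1 y1 x2 y2 : ℤ) (h1 : (x1:ℝ) ≤ (x2:ℝ) + 1) (h2 : (y1:ℝ) ≤ (y2:ℝ) + 1) :
    shapeFn x1 y1 x2 y2 ≤ 2 * (((x2:ℝ) - x1 + 1) + ((y2:ℝ) - y1 + 1)) :=
  sqrt_sum_sq_le _ _ (by linarith) (by linarith)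

lemma shapeFn_le_deficit (x1 y1 x2 y2 : ℤ) (S : ℝ) (h1 : (x1:ℝ) ≤ (x2:ℝ) + 1)
    (h2 : (y1:ℝ) ≤ (y2:ℝ) + 1)
    (hS : ((x2:ℝ) - x1 + 1) + ((y2:ℝ) - y1 + 1) ≤ S) (hS0 : 0 < S) :
    shapeFn x1 y1 x2 y2 ≤ 2 * (((x2:ℝ) - x1 + 1) + ((y2:ℝ) - y1 + 1)) -
      (((x2:ℝ) - x1 + 1) - ((y2:ℝ) - y1 + 1)) ^ 2 / (2 * S) :=
  sqrt_sum_sq_le' _ _ S (by linarith) (by linarith) hS hS0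

lemma shapeFn_diag (x y : ℤ) (h : (x:ℝ) ≤ (y:ℝ) + 1) :
    shapeFn x x y y = 4 * ((y:ℝ) - x + 1) := by
  have h0 : (0:ℝ) ≤ (y:ℝ) - x + 1 := by linarith
  unfold shapeFn
  rw [← two_mul, mul_pow, Real.sq_sqrt h0]
  norm_num

theorem diag_deficit_three_piece (M : ℤ) (hM : 0 < M) (ℓ δ : ℝ) (hℓ : 0 < ℓ) (hℓ1 : ℓ < 1)
    (hδ : 0 < δ) :
    ∃ (n0 : ℕ) (c1 : ℝ), 0 < c1 ∧ ∀ n : ℕ, n0 ≤ n →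
      ∀ i j s t : ℤ,
        ⌊ℓ * (n : ℝ) ^ ((2 : ℝ) / 3 + δ)⌋ - M * n ≤ i →
        (t : ℝ) ≤ M * n →
        i ≤ j → j ≤ s → s ≤ t →
        (t : ℝ) ≤ (s : ℝ) + (n : ℝ) ^ ((1 : ℝ) / 3) →
        (j : ℝ) ≤ (i : ℝ) + (n : ℝ) ^ ((1 : ℝ) / 3) →
        shapeFn (⌊ℓ * (n : ℝ) ^ ((2 : ℝ) / 3 + δ)⌋ - M * n) (-(M * n)) j j +
          shapeFn i i t t +
          shapeFn s s (⌊ℓ * (n : ℝ) ^ ((2 : ℝ) / 3 + δ)⌋ + M * n) (M * n) ≤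
          8 * M * n - c1 * (n : ℝ) ^ ((1 : ℝ) / 3 + 2 * δ) := by
  have hMR : (0:ℝ) < (M:ℝ) := by exact_mod_cast hM
  have hM1 : (1:ℝ) ≤ (M:ℝ) := by exact_mod_cast hM
  set c1 : ℝ := ℓ ^ 2 / (96 * M) with hc1def
  have hc1 : 0 < c1 := div_pos (by positivity) (by positivity)
  have hα : (0:ℝ) < 2 / 3 + δ := by linarith
  have h2δ : (0:ℝ) < 2 * δ := by linarith
  have T1 : Filter.Tendsto (fun n : ℕ => ℓ * (n:ℝ) ^ ((2:ℝ)/3 + δ)) Filter.atTop Filter.atTop :=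
    Filter.Tendsto.const_mul_atTop hℓ
      ((tendsto_rpow_atTop hα).comp tendsto_natCast_atTop_atTop)
  have T2 : Filter.Tendsto (fun n : ℕ => c1 * (n:ℝ) ^ (2*δ)) Filter.atTop Filter.atTop :=
    Filter.Tendsto.const_mul_atTop hc1
      ((tendsto_rpow_atTop h2δ).comp tendsto_natCast_atTop_atTop)
  have E : ∀ᶠ n : ℕ in Filter.atTop,
      1 ≤ n ∧ 2 ≤ ℓ * (n:ℝ) ^ ((2:ℝ)/3 + δ) ∧ 20 ≤ c1 * (n:ℝ) ^ (2*δ) :=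
    (Filter.eventually_ge_atTop 1).and
      ((T1.eventually_ge_atTop 2).and (T2.eventually_ge_atTop 20))
  obtain ⟨n0, hn0⟩ := Filter.eventually_atTop.mp E
  refine ⟨n0, c1, hc1, ?_⟩
  intro n hn i j s t hi ht hij hjs hst hts hji
  obtain ⟨hn1, h2, h3⟩ := hn0 n hn
  have hN1 : (1:ℝ) ≤ (n:ℝ) := by exact_mod_cast hn1
  have hN0 : (0:ℝ) < (n:ℝ) := by linarith
  set KZ : ℤ := ⌊ℓ * (n:ℝ) ^ ((2:ℝ)/3 + δ)⌋ with hKZ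
  have hKle : (KZ:ℝ) ≤ ℓ * (n:ℝ) ^ ((2:ℝ)/3 + δ) := Int.floor_le _
  have hKgt : ℓ * (n:ℝ) ^ ((2:ℝ)/3 + δ) - 1 < (KZ:ℝ) := Int.sub_one_lt_floor _
  have hKge : ℓ * (n:ℝ) ^ ((2:ℝ)/3 + δ) / 2 ≤ (KZ:ℝ) := by linarith
  have hK1 : (1:ℝ) ≤ (KZ:ℝ) := by linarith
  have hiR : (KZ:ℝ) - (M:ℝ) * (n:ℝ) ≤ (i:ℝ) := by exact_mod_cast hi
  have hijR : (i:ℝ) ≤ (j:ℝ) := by exact_mod_cast hij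
  have hjsR : (j:ℝ) ≤ (s:ℝ) := by exact_mod_cast hjs
  have hstR : (s:ℝ) ≤ (t:ℝ) := by exact_mod_cast hst
  have hMN1 : (1:ℝ) ≤ (M:ℝ) * (n:ℝ) := by nlinarith
  have hMNpos : (0:ℝ) < 6 * ((M:ℝ) * (n:ℝ)) := by linarith
  have hA : shapeFn (KZ - M * (n:ℤ)) (-(M * (n:ℤ))) j j ≤
      2 * (2 * (j:ℝ) - (KZ:ℝ) + 2 * ((M:ℝ) * (n:ℝ)) + 2) -
        (KZ:ℝ) ^ 2 / (2 * (6 * ((M:ℝ) * (n:ℝ)))) := by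
    have h := shapeFn_le_deficit (KZ - M * (n:ℤ)) (-(M * (n:ℤ))) j j (6 * ((M:ℝ) * (n:ℝ)))
      (by push_cast; linarith) (by push_cast; linarith) (by push_cast; linarith) hMNpos
    refine h.trans (le_of_eq ?_)
    push_cast
    ring
  have hB : shapeFn i i t t = 4 * ((t:ℝ) - (i:ℝ) + 1) := shapeFn_diag i t (by linarith)
  have hC : shapeFn s s (KZ + M * (n:ℤ)) (M * (n:ℤ)) ≤
      2 * (((KZ:ℝ) + (M:ℝ) * (n:ℝ) - (s:ℝ) + 1) + ((M:ℝ) * (n:ℝ) - (s:ℝ) + 1)) := by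
    have h := shapeFn_le_two_mul s s (KZ + M * (n:ℤ)) (M * (n:ℤ))
      (by push_cast; linarith) (by push_cast; linarith)
    refine h.trans (le_of_eq ?_)
    push_cast
    ring
  have hpow : (n:ℝ) ^ ((2:ℝ)/3 + δ) * (n:ℝ) ^ ((2:ℝ)/3 + δ)
      = (n:ℝ) * (n:ℝ) ^ ((1:ℝ)/3 + 2*δ) := by
    rw [← Real.rpow_add hN0, show (2:ℝ)/3 + δ + ((2:ℝ)/3 + δ) = 1 + ((1:ℝ)/3 + 2*δ) by ring,
      Real.rpow_add hN0, Real.rpow_one]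
  have F1 : 2 * c1 * (n:ℝ) ^ ((1:ℝ)/3 + 2*δ) ≤ (KZ:ℝ) ^ 2 / (2 * (6 * ((M:ℝ) * (n:ℝ)))) := by
    rw [le_div_iff₀ (by linarith)]
    have hsq : (ℓ * (n:ℝ) ^ ((2:ℝ)/3 + δ) / 2) ^ 2 ≤ (KZ:ℝ) ^ 2 :=
      pow_le_pow_left₀ (by positivity) hKge 2
    have heq : (ℓ * (n:ℝ) ^ ((2:ℝ)/3 + δ) / 2) ^ 2
        = ℓ ^ 2 / 4 * ((n:ℝ) * (n:ℝ) ^ ((1:ℝ)/3 + 2*δ)) := by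
      rw [← hpow]; ring
    have hLHS : 2 * c1 * (n:ℝ) ^ ((1:ℝ)/3 + 2*δ) * (2 * (6 * ((M:ℝ) * (n:ℝ))))
        = ℓ ^ 2 / 4 * ((n:ℝ) * (n:ℝ) ^ ((1:ℝ)/3 + 2*δ)) := by
      rw [hc1def]; field_simp; ring
    linarith
  have hsplit : (n:ℝ) ^ ((1:ℝ)/3 + 2*δ) = (n:ℝ) ^ ((1:ℝ)/3) * (n:ℝ) ^ (2*δ) :=
    Real.rpow_add hN0 _ _
  have h13 : (1:ℝ) ≤ (n:ℝ) ^ ((1:ℝ)/3) := Real.one_le_rpow hN1 (by norm_num)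
  have F2 : 8 * (n:ℝ) ^ ((1:ℝ)/3) + 12 ≤ c1 * (n:ℝ) ^ ((1:ℝ)/3 + 2*δ) := by
    have h20 := mul_le_mul_of_nonneg_left h3 (by positivity : (0:ℝ) ≤ (n:ℝ) ^ ((1:ℝ)/3))
    rw [hsplit]
    linarith [h20, h13]
  linarith [hA, hB, hC, F1, F2]
end

section
/- There exists ε > 0 such that for all real r with 0 < r < ε and all sufficiently large m (depending on ε), if m' is a positive integer with m'/m ≤ r, then log C(m+m'-2, m-1) - sqrt(m m') ≤ -sqrt(m m')/2. -/
/-!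
From `C(n, k) ≤ n ^ k / k!` and `k ^ k / k! ≤ e ^ k` one gets `log C(n, k) ≤ k (1 + log (n / k))`.
With `s = m' / m` this bounds `log C(m + m', m')` by `√(m m') · √s (1 + log (1 + 1 / s))`, and the
second factor tends to `0` as `s → 0⁺` because `√s · log s → 0`.
-/

open Real Filter Topology

theorem Nat.choose_le_add_two_choose_succ (n k : ℕ) : n.choose k ≤ (n + 2).choose (k + 1) :=
  calc n.choose k ≤ (n + 1).choose (k + 1) := by
        rw [Nat.choose_succ_succ]; exact Nat.le_add_right _ _
    _ ≤ (n + 2).choose (k + 1) := Nat.choose_le_succ _ _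

theorem log_choose_le_mul_one_add_log {n k : ℕ} (hk : 0 < k) (hkn : k ≤ n) :
    log (n.choose k) ≤ k * (1 + log (n / k)) := by
  have hk' : (0 : ℝ) < k := by exact_mod_cast hk
  have hn : (0 : ℝ) < n := by exact_mod_cast hk.trans_le hkn
  have hC : (n.choose k : ℝ) ≤ (n / k) ^ k * exp k := calc
    (n.choose k : ℝ) ≤ n ^ k / k.factorial := Nat.choose_le_pow_div k n
    _ = (n / k) ^ k * (k ^ k / k.factorial) := by rw [div_pow]; field_simp
    _ ≤ (n / k) ^ k * exp k := by gcongr; exact pow_div_factorial_le_exp _ hk'.le k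
  calc log (n.choose k) ≤ log ((n / k) ^ k * exp k) :=
        log_le_log (by exact_mod_cast Nat.choose_pos hkn) hC
    _ = k * (1 + log (n / k)) := by
        rw [log_mul (by positivity) (by positivity), log_pow, log_exp]; ring

theorem tendsto_sqrt_mul_one_add_log_one_add_inv :
    Tendsto (fun s => √s * (1 + log (1 + s⁻¹))) (𝓝[>] 0) (𝓝 0) := by
  have hsqrt : Tendsto (fun s : ℝ => √s) (𝓝[>] 0) (𝓝 0) := by
    simpa using (continuous_sqrt.tendsto 0).mono_left nhdsWithin_le_nhds
  have hlog_one_add : Tendsto (fun s : ℝ => log (1 + s)) (𝓝[>] 0) (𝓝 0) := by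
    have : ContinuousAt (fun s : ℝ => log (1 + s)) 0 := ContinuousAt.log (by fun_prop) (by norm_num)
    simpa using this.tendsto.mono_left nhdsWithin_le_nhds
  have hlog : Tendsto (fun s : ℝ => log s * √s) (𝓝[>] 0) (𝓝 0) := by
    convert tendsto_log_mul_rpow_nhdsGT_zero (r := 1 / 2) one_half_pos using 3
    rw [sqrt_eq_rpow]
  have hsum := (hsqrt.add (hsqrt.mul hlog_one_add)).sub hlog
  simp only [mul_zero, add_zero, sub_zero] at hsum
  refine hsum.congr' (eventually_mem_nhdsWithin.mono fun s (hs : 0 < s) => ?_)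
  dsimp only
  rw [show 1 + s⁻¹ = (1 + s) / s by field_simp; ring, log_div (by positivity) hs.ne']
  ring

theorem log_choose_vs_sqrt :
    ∃ ε : ℝ, 0 < ε ∧ ∃ m0 : ℕ, ∀ r : ℝ, 0 < r → r < ε →
      ∀ m : ℕ, m0 ≤ m → ∀ m' : ℕ, 1 ≤ m' → (m' : ℝ) / m ≤ r →
        Real.log (Nat.choose (m + m' - 2) (m - 1)) - Real.sqrt ((m : ℝ) * m') ≤
          -Real.sqrt ((m : ℝ) * m') / 2 := by
  obtain ⟨ε, hε, hsmall⟩ := (nhdsGT_basis (0 : ℝ)).eventually_iff.1 <|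
    tendsto_sqrt_mul_one_add_log_one_add_inv.eventually (ge_mem_nhds one_half_pos)
  refine ⟨ε, hε, 1, fun r _ hrε m hm m' hm' hratio => ?_⟩
  have hm0 : (0 : ℝ) < m := by exact_mod_cast hm
  have hm'0 : (0 : ℝ) < m' := by exact_mod_cast hm'
  set s : ℝ := m' / m with hs
  have hC : (m + m' - 2).choose (m - 1) ≤ (m + m').choose m' := by
    have := Nat.choose_le_add_two_choose_succ (m + m' - 2) (m - 1)
    rwa [show m + m' - 2 + 2 = m + m' by omega, show m - 1 + 1 = m by omega,
      Nat.choose_symm_add] at this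
  have hrescale : (m' : ℝ) * (1 + log ((m + m') / m')) =
      √(m * m') * (√s * (1 + log (1 + s⁻¹))) := by
    have hsqrt : √(m * m') * √s = m' := by
      rw [← sqrt_mul (by positivity), show (m : ℝ) * m' * s = m' ^ 2 by rw [hs]; field_simp,
        sqrt_sq hm'0.le]
    rw [← mul_assoc, hsqrt, show (1 : ℝ) + s⁻¹ = (m + m') / m' by rw [hs]; field_simp; ring]
  have hbound : log ((m + m' - 2).choose (m - 1)) ≤ √(m * m') / 2 := calc
    log ((m + m' - 2).choose (m - 1)) ≤ log ((m + m').choose m') :=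
        log_le_log (by exact_mod_cast Nat.choose_pos (by omega)) (Nat.cast_le.2 hC)
    _ ≤ m' * (1 + log ((m + m') / m')) := by
        exact_mod_cast log_choose_le_mul_one_add_log hm' (Nat.le_add_left m' m)
    _ = √(m * m') * (√s * (1 + log (1 + s⁻¹))) := hrescale
    _ ≤ √(m * m') * (1 / 2) := by
        gcongr; exact hsmall ⟨by positivity, hratio.trans_lt hrε⟩
    _ = √(m * m') / 2 := by ring
  linarith
end

section
/- (Monotonicity of rightmost geodesics, finite model.) Consider ℤ² (or the half-plane H = {(i,j): i ≥ j}) with arbitrary strictly positive vertex weights w_{i,j}, where distinct up-right paths between two ordered points may have tied maximal weights; define the rightmost maximizing path π⁺(a,b;c,e) from (a,b) to (c,e) as the maximizing up-right path that is rightmost (maximal in the partial order where a path is to the right of another if at every level its leftmost x-coordinate is at least as large). Suppose (x1,y) ≤ (w1,z), (x2,y) ≤ (w2,z), x1 ≤ x2, and w1 ≤ w2. Then for every level j, the leftmost x-coordinate of π⁺(x1,y;w1,z) at level j is at most the leftmost x-coordinate of π⁺(x2,y;w2,z) at level j (with the convention that it is -∞ if the path does not visit level j). -/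
/-- `π` is an up-right lattice path with `n` steps from `p` to `q`, contained in `O`. -/
def IsUpRightPathIn (O : Set (ℤ × ℤ)) (π : ℕ → ℤ × ℤ) (n : ℕ) (p q : ℤ × ℤ) : Prop :=
  π 0 = p ∧ π n = q ∧
    (∀ i < n, π (i + 1) = ((π i).1 + 1, (π i).2) ∨ π (i + 1) = ((π i).1, (π i).2 + 1)) ∧
    ∀ i ≤ n, π i ∈ O

/-- The weight of a path, excluding the terminal vertex `π n`. -/
noncomputable def pathWeight (w : ℤ × ℤ → ℝ) (π : ℕ → ℤ × ℤ) (n : ℕ) : ℝ :=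
  ∑ i ∈ Finset.range n, w (π i)

/-- The last passage time from `p` to `q` restricted to the region `O`. -/
noncomputable def LPPIn (O : Set (ℤ × ℤ)) (w : ℤ × ℤ → ℝ) (p q : ℤ × ℤ) : ℝ :=
  sSup {S | ∃ π n, IsUpRightPathIn O π n p q ∧ S = pathWeight w π n}

/-- `π` is a maximizing path (geodesic) from `p` to `q` in the region `O`. -/
def IsMaximizing (O : Set (ℤ × ℤ)) (w : ℤ × ℤ → ℝ) (π : ℕ → ℤ × ℤ) (n : ℕ)
    (p q : ℤ × ℤ) : Prop :=
  IsUpRightPathIn O π n p q ∧ pathWeight w π n = LPPIn O w p q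

/-- The leftmost `x`-coordinate of the path `π` (with `n` steps) on level `j`,
with the convention that it is `⊥ = -∞` if the path does not visit level `j`. -/
noncomputable def leftmostAt (π : ℕ → ℤ × ℤ) (n : ℕ) (j : ℤ) : EReal :=
  if ∃ i ≤ n, (π i).2 = j then
    sInf {x : EReal | ∃ i ≤ n, (π i).2 = j ∧ x = ((((π i).1 : ℤ) : ℝ) : EReal)}
  else ⊥

section Basic

variable {O : Set (ℤ × ℤ)} {π : ℕ → ℤ × ℤ} {n : ℕ} {p q : ℤ × ℤ}

theorem UPR.step2 (h : IsUpRightPathIn O π n p q) {i : ℕ} (hi : i < n) :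
    ((π (i+1)).2 = (π i).2 ∧ (π (i+1)).1 = (π i).1 + 1) ∨
      ((π (i+1)).2 = (π i).2 + 1 ∧ (π (i+1)).1 = (π i).1) := by
  rcases h.2.2.1 i hi with hs | hs
  · left; rw [hs]; exact ⟨rfl, rfl⟩
  · right; rw [hs]; exact ⟨rfl, rfl⟩

theorem UPR.coordsum (h : IsUpRightPathIn O π n p q) :
    ∀ i ≤ n, (π i).1 + (π i).2 = p.1 + p.2 + i := by
  intro i
  induction i with
  | zero => intro _; rw [h.1]; simp
  | succ i ih =>
    intro hi
    have h0 := ih (by omega)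
    rcases UPR.step2 h (show i < n by omega) with ⟨h2, h1⟩ | ⟨h2, h1⟩ <;> push_cast <;> omega

theorem UPR.mono (h : IsUpRightPathIn O π n p q) :
    ∀ i j, i ≤ j → j ≤ n → (π i).1 ≤ (π j).1 ∧ (π i).2 ≤ (π j).2 := by
  intro i j hij
  induction j with
  | zero =>
    intro _
    have hi0 : i = 0 := by omega
    subst hi0; exact ⟨le_refl _, le_refl _⟩
  | succ j ih =>
    intro hj
    rcases Nat.lt_or_ge i (j+1) with hlt | hge
    · have := ih (by omega) (by omega)
      rcases UPR.step2 h (show j < n by omega) with ⟨h2, h1⟩ | ⟨h2, h1⟩ <;>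
        exact ⟨by omega, by omega⟩
    · have : i = j + 1 := by omega
      subst this; exact ⟨le_refl _, le_refl _⟩

theorem UPR.mono_fst (h : IsUpRightPathIn O π n p q) {i j : ℕ} (hij : i ≤ j) (hj : j ≤ n) :
    (π i).1 ≤ (π j).1 := (UPR.mono h i j hij hj).1

theorem UPR.mono_snd (h : IsUpRightPathIn O π n p q) {i j : ℕ} (hij : i ≤ j) (hj : j ≤ n) :
    (π i).2 ≤ (π j).2 := (UPR.mono h i j hij hj).2

theorem UPR.visits (h : IsUpRightPathIn O π n p q) {k : ℤ} (h1 : p.2 ≤ k) (h2 : k ≤ q.2) :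
    ∃ i ≤ n, (π i).2 = k := by
  have key : ∀ m ≤ n, k ≤ (π m).2 → ∃ i ≤ m, (π i).2 = k := by
    intro m
    induction m with
    | zero => intro _ hk; exact ⟨0, le_refl _, le_antisymm (by rw [h.1]; exact h1) hk⟩
    | succ m ih =>
      intro hm hk
      rcases le_or_gt k (π m).2 with hle | hlt
      · obtain ⟨i, hi, hik⟩ := ih (by omega) hle
        exact ⟨i, by omega, hik⟩
      · refine ⟨m+1, le_refl _, ?_⟩
        rcases UPR.step2 h (show m < n by omega) with ⟨h2', _⟩ | ⟨h2', _⟩ <;> omega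
  exact key n le_rfl (by rw [h.2.1]; exact h2)

theorem UPR.snd_bounds (h : IsUpRightPathIn O π n p q) {i : ℕ} (hi : i ≤ n) :
    p.2 ≤ (π i).2 ∧ (π i).2 ≤ q.2 := by
  constructor
  · have := UPR.mono_snd h (Nat.zero_le i) hi; rwa [h.1] at this
  · have := UPR.mono_snd h hi le_rfl; rwa [h.2.1] at this

/-- horizontal fill: if levels agree at `i` and `i'`, the path moves right in between. -/
theorem UPR.horiz (h : IsUpRightPathIn O π n p q) {i i' : ℕ} (hii : i ≤ i') (hi' : i' ≤ n)
    (hlev : (π i).2 = (π i').2) :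
    ∀ s, i + s ≤ i' → π (i + s) = ((π i).1 + s, (π i).2) := by
  intro s
  induction s with
  | zero => intro _; simp
  | succ s ih =>
    intro hs
    have hps := ih (by omega)
    have hup : (π (i+s)).2 = (π i).2 := by rw [hps]
    have hx : (π (i+s)).1 = (π i).1 + s := by rw [hps]
    have hnext : (π (i+s+1)).2 ≤ (π i').2 :=
      UPR.mono_snd h (show i+s+1 ≤ i' by omega) hi'
    rcases UPR.step2 h (show i+s < n by omega) with ⟨h2', h1'⟩ | ⟨h2', h1'⟩
    · have hidx : i + (s+1) = i + s + 1 := by omega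
      rw [hidx]
      have : π (i+s+1) = ((π (i+s+1)).1, (π (i+s+1)).2) := rfl
      rw [this, h2', h1', hup, hx]
      push_cast
      simp [Prod.ext_iff]
      ring
    · exfalso; omega

theorem UPR.fill (h : IsUpRightPathIn O π n p q) {i i' : ℕ} (hii : i ≤ i') (hi' : i' ≤ n)
    (hlev : (π i).2 = (π i').2) {x : ℤ} (hx1 : (π i).1 ≤ x) (hx2 : x ≤ (π i').1) :
    ∃ t ≤ n, π t = (x, (π i).2) := by
  have hend := UPR.horiz h hii hi' hlev (i' - i) (by omega)
  rw [show i + (i' - i) = i' by omega] at hend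
  have hxle : x - (π i).1 ≤ (i' : ℤ) - i := by
    have : (π i').1 = (π i).1 + ((i' - i : ℕ) : ℤ) := by rw [hend]
    push_cast at this
    omega
  have htn : ((x - (π i).1).toNat : ℤ) = x - (π i).1 := Int.toNat_of_nonneg (by omega)
  refine ⟨i + (x - (π i).1).toNat, by omega, ?_⟩
  have := UPR.horiz h hii hi' hlev (x - (π i).1).toNat (by omega)
  rw [this, htn]
  simp [Prod.ext_iff]

end Basic

section FirstIdx

open Classical in
noncomputable def UPR.firstIdx (π : ℕ → ℤ × ℤ) (n : ℕ) (j : ℤ) : ℕ :=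
  if h : ∃ i, i ≤ n ∧ (π i).2 = j then Nat.find h else 0

noncomputable def UPR.Lval (π : ℕ → ℤ × ℤ) (n : ℕ) (j : ℤ) : ℤ :=
  (π (UPR.firstIdx π n j)).1

variable {O : Set (ℤ × ℤ)} {π : ℕ → ℤ × ℤ} {n : ℕ} {p q : ℤ × ℤ} {j : ℤ}

theorem UPR.firstIdx_spec (hvis : ∃ i, i ≤ n ∧ (π i).2 = j) :
    UPR.firstIdx π n j ≤ n ∧ (π (UPR.firstIdx π n j)).2 = j := by
  classical
  rw [UPR.firstIdx, dif_pos hvis]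
  exact Nat.find_spec hvis

theorem UPR.firstIdx_min (hvis : ∃ i, i ≤ n ∧ (π i).2 = j) {i : ℕ} (hi : i ≤ n)
    (hj : (π i).2 = j) : UPR.firstIdx π n j ≤ i := by
  classical
  rw [UPR.firstIdx, dif_pos hvis]
  exact Nat.find_min' hvis ⟨hi, hj⟩

theorem UPR.Lval_min (h : IsUpRightPathIn O π n p q) (hvis : ∃ i, i ≤ n ∧ (π i).2 = j)
    {i : ℕ} (hi : i ≤ n) (hj : (π i).2 = j) : UPR.Lval π n j ≤ (π i).1 :=
  UPR.mono_fst h (UPR.firstIdx_min hvis hi hj) hi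

theorem UPR.Lval_mem (hvis : ∃ i, i ≤ n ∧ (π i).2 = j) :
    π (UPR.firstIdx π n j) = (UPR.Lval π n j, j) := by
  have := UPR.firstIdx_spec (π := π) hvis
  rw [UPR.Lval]
  exact Prod.ext rfl this.2

theorem UPR.Lval_start (h : IsUpRightPathIn O π n p q) : UPR.Lval π n p.2 = p.1 := by
  have hvis : ∃ i, i ≤ n ∧ (π i).2 = p.2 := ⟨0, Nat.zero_le _, by rw [h.1]⟩
  have h0 : UPR.firstIdx π n p.2 = 0 :=
    Nat.le_zero.mp (UPR.firstIdx_min hvis (Nat.zero_le _) (by rw [h.1]))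
  rw [UPR.Lval, h0, h.1]

/-- the step before first reaching level `k+1` is an up step from `(Lval (k+1), k)`. -/
theorem UPR.enter (h : IsUpRightPathIn O π n p q) {k : ℤ} (hk1 : p.2 ≤ k) (hk2 : k + 1 ≤ q.2) :
    1 ≤ UPR.firstIdx π n (k+1) ∧
      π (UPR.firstIdx π n (k+1) - 1) = (UPR.Lval π n (k+1), k) := by
  have hvis : ∃ i, i ≤ n ∧ (π i).2 = k + 1 := by
    obtain ⟨i, hi, hik⟩ := UPR.visits h (by omega : p.2 ≤ k+1) hk2
    exact ⟨i, hi, hik⟩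
  obtain ⟨hfn, hfl⟩ := UPR.firstIdx_spec (π := π) hvis
  set f := UPR.firstIdx π n (k+1) with hf
  have hf1 : 1 ≤ f := by
    by_contra hc
    have : f = 0 := by omega
    rw [this] at hfl
    rw [h.1] at hfl
    omega
  have hne : (π (f-1)).2 ≠ k + 1 := by
    intro hc
    have := UPR.firstIdx_min hvis (show f - 1 ≤ n by omega) hc
    omega
  have hstep := UPR.step2 h (show f - 1 < n by omega)
  rw [show f - 1 + 1 = f by omega] at hstep
  refine ⟨hf1, ?_⟩
  rcases hstep with ⟨h2, h1⟩ | ⟨h2, h1⟩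
  · exfalso; rw [hfl] at h2; exact hne h2.symm
  · have hl : (π (f-1)).2 = k := by omega
    have hx : (π (f-1)).1 = UPR.Lval π n (k+1) := by rw [UPR.Lval, ← hf, ← h1]
    exact Prod.ext hx hl

theorem UPR.Lval_mono (h : IsUpRightPathIn O π n p q) {k : ℤ} (hk1 : p.2 ≤ k)
    (hk2 : k + 1 ≤ q.2) : UPR.Lval π n k ≤ UPR.Lval π n (k+1) := by
  obtain ⟨hf1, hc⟩ := UPR.enter h hk1 hk2
  have hvis : ∃ i, i ≤ n ∧ (π i).2 = k + 1 := by
    obtain ⟨i, hi, hik⟩ := UPR.visits h (by omega : p.2 ≤ k+1) hk2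
    exact ⟨i, hi, hik⟩
  have hfn := (UPR.firstIdx_spec (π := π) hvis).1
  have hidx : UPR.firstIdx π n (k+1) - 1 ≤ n := by omega
  have hlev : (π (UPR.firstIdx π n (k+1) - 1)).2 = k := by rw [hc]
  have hx : (π (UPR.firstIdx π n (k+1) - 1)).1 = UPR.Lval π n (k+1) := by rw [hc]
  have := UPR.Lval_min h ⟨_, hidx, hlev⟩ hidx hlev
  rwa [hx] at this

end FirstIdx

section Leftmost

variable {O : Set (ℤ × ℤ)} {π : ℕ → ℤ × ℤ} {n : ℕ} {p q : ℤ × ℤ} {j : ℤ}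

theorem UPR.leftmostAt_eq_bot (hvis : ¬ ∃ i ≤ n, (π i).2 = j) :
    leftmostAt π n j = ⊥ := by rw [leftmostAt, if_neg hvis]

theorem UPR.le_leftmostAt (hvis : ∃ i ≤ n, (π i).2 = j) {L : ℤ}
    (hL : ∀ i ≤ n, (π i).2 = j → L ≤ (π i).1) :
    ((L : ℝ) : EReal) ≤ leftmostAt π n j := by
  rw [leftmostAt, if_pos hvis]
  apply le_sInf
  rintro x ⟨i, hi, hij, rfl⟩
  have := hL i hi hij
  exact_mod_cast this

theorem UPR.leftmostAt_le {i : ℕ} (hi : i ≤ n) (hij : (π i).2 = j) :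
    leftmostAt π n j ≤ (((π i).1 : ℝ) : EReal) := by
  rw [leftmostAt, if_pos ⟨i, hi, hij⟩]
  exact sInf_le ⟨i, hi, hij, rfl⟩

theorem UPR.leftmostAt_eq (h : IsUpRightPathIn O π n p q) (hvis : ∃ i, i ≤ n ∧ (π i).2 = j) :
    leftmostAt π n j = ((UPR.Lval π n j : ℝ) : EReal) := by
  have hvis' : ∃ i ≤ n, (π i).2 = j := by obtain ⟨i, hi, hj⟩ := hvis; exact ⟨i, hi, hj⟩
  refine le_antisymm ?_ ?_
  · have hspec := UPR.firstIdx_spec (π := π) hvis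
    have := UPR.leftmostAt_le (π := π) hspec.1 hspec.2
    rwa [UPR.Lval]
  · exact UPR.le_leftmostAt hvis' (fun i hi hij => UPR.Lval_min h hvis hi hij)

end Leftmost

theorem UPR.exists_switch (P : ℤ → Prop) (a b : ℤ) (ha : P a) (hb : ¬ P b) (hab : a ≤ b) :
    ∃ k, a ≤ k ∧ k < b ∧ P k ∧ ¬ P (k+1) := by
  by_contra hc
  push_neg at hc
  have key : ∀ m : ℤ, a ≤ m → m ≤ b → P m := by
    refine Int.le_induction ?_ ?_
    · intro _; exact ha
    · intro m hm ih hmb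
      have hPm := ih (by omega)
      exact hc m hm (by omega) hPm
  exact hb (key b hab le_rfl)

section Splice

def UPR.cat (π ρ : ℕ → ℤ × ℤ) (n : ℕ) : ℕ → ℤ × ℤ :=
  fun i => if i < n then π i else ρ (i - n)

def UPR.subp (π : ℕ → ℤ × ℤ) (a : ℕ) : ℕ → ℤ × ℤ := fun i => π (a + i)

variable {O : Set (ℤ × ℤ)} {w : ℤ × ℤ → ℝ} {π ρ : ℕ → ℤ × ℤ} {n m : ℕ} {p q r : ℤ × ℤ}

theorem UPR.cat_apply_ge {i : ℕ} (hi : n ≤ i) : UPR.cat π ρ n i = ρ (i - n) := by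
  rw [UPR.cat, if_neg (by omega)]

theorem UPR.cat_apply_lt {i : ℕ} (hi : i < n) : UPR.cat π ρ n i = π i := by
  rw [UPR.cat, if_pos hi]

theorem UPR.cat_path (h1 : IsUpRightPathIn O π n p q) (h2 : IsUpRightPathIn O ρ m q r) :
    IsUpRightPathIn O (UPR.cat π ρ n) (n + m) p r := by
  have hcat : ∀ i ≤ n + m, (n ≤ i → UPR.cat π ρ n i = ρ (i - n)) := fun i _ hi =>
    UPR.cat_apply_ge hi
  have hq : π n = ρ 0 := by rw [h1.2.1, h2.1]
  have happ : ∀ i, i ≤ n → UPR.cat π ρ n i = π i := by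
    intro i hi
    rcases Nat.lt_or_ge i n with h | h
    · exact UPR.cat_apply_lt h
    · have : i = n := by omega
      subst this
      rw [UPR.cat_apply_ge le_rfl, Nat.sub_self, ← hq]
  refine ⟨?_, ?_, ?_, ?_⟩
  · rw [happ 0 (Nat.zero_le _), h1.1]
  · rw [UPR.cat_apply_ge (by omega), Nat.add_sub_cancel_left, h2.2.1]
  · intro i hi
    rcases Nat.lt_or_ge (i+1) (n+1) with h | h
    · rw [happ i (by omega), happ (i+1) (by omega)]
      exact h1.2.2.1 i (by omega)
    · rw [UPR.cat_apply_ge (show n ≤ i by omega), UPR.cat_apply_ge (show n ≤ i+1 by omega)]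
      have : i + 1 - n = (i - n) + 1 := by omega
      rw [this]
      exact h2.2.2.1 (i - n) (by omega)
  · intro i hi
    rcases Nat.lt_or_ge i n with h | h
    · rw [happ i (by omega)]; exact h1.2.2.2 i (by omega)
    · rw [UPR.cat_apply_ge h]; exact h2.2.2.2 (i - n) (by omega)

theorem UPR.cat_weight : pathWeight w (UPR.cat π ρ n) (n + m) = pathWeight w π n + pathWeight w ρ m := by
  rw [pathWeight, pathWeight, pathWeight, Finset.sum_range_add]
  congr 1
  · exact Finset.sum_congr rfl fun i hi => by
      rw [UPR.cat_apply_lt (Finset.mem_range.mp hi)]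
  · exact Finset.sum_congr rfl fun i _ => by
      rw [UPR.cat_apply_ge (Nat.le_add_right n i), Nat.add_sub_cancel_left]

theorem UPR.subp_path (h : IsUpRightPathIn O π n p q) {a b : ℕ} (hab : a ≤ b) (hbn : b ≤ n) :
    IsUpRightPathIn O (UPR.subp π a) (b - a) (π a) (π b) := by
  refine ⟨by simp [UPR.subp], by rw [UPR.subp, show a + (b - a) = b by omega], ?_, ?_⟩
  · intro i hi
    have := h.2.2.1 (a + i) (by omega)
    rw [UPR.subp, UPR.subp]
    rw [show a + (i + 1) = a + i + 1 by omega]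
    exact this
  · intro i hi
    rw [UPR.subp]
    exact h.2.2.2 (a + i) (by omega)

theorem UPR.weight_split (hw : True) {a b : ℕ} (hab : a ≤ b) (hbn : b ≤ n) :
    pathWeight w π n =
      pathWeight w (UPR.subp π 0) a + pathWeight w (UPR.subp π a) (b - a) +
        pathWeight w (UPR.subp π b) (n - b) := by
  simp only [pathWeight, UPR.subp, zero_add]
  conv_lhs => rw [show n = a + ((b - a) + (n - b)) by omega]
  rw [Finset.sum_range_add, Finset.sum_range_add, ← add_assoc]
  congr 1
  apply Finset.sum_congr rfl
  intro i _
  congr 2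
  omega

end Splice

section LPP

variable {O : Set (ℤ × ℤ)} {w : ℤ × ℤ → ℝ} {p q : ℤ × ℤ}

theorem UPR.bounds (h : IsUpRightPathIn O π n p q) {i : ℕ} (hi : i ≤ n) :
    p ≤ π i ∧ π i ≤ q := by
  have h1 := UPR.mono h 0 i (Nat.zero_le _) hi
  have h2 := UPR.mono h i n hi le_rfl
  rw [h.1] at h1; rw [h.2.1] at h2
  exact ⟨⟨h1.1, h1.2⟩, ⟨h2.1, h2.2⟩⟩

theorem UPR.pathWeight_le_box (hw : ∀ v, 0 < w v) {π : ℕ → ℤ × ℤ} {n : ℕ}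
    (h : IsUpRightPathIn O π n p q) :
    pathWeight w π n ≤ ∑ v ∈ Finset.Icc p q, w v := by
  have hinj : Set.InjOn π (Finset.range n) := by
    intro i hi j hj hij
    simp only [Finset.coe_range, Set.mem_Iio] at hi hj
    have hi' := UPR.coordsum h i (by omega)
    have hj' := UPR.coordsum h j (by omega)
    rw [hij] at hi'
    omega
  rw [pathWeight, ← Finset.sum_image (fun i hi j hj hij => hinj hi hj hij)]
  apply Finset.sum_le_sum_of_subset_of_nonneg
  · intro v hv
    simp only [Finset.mem_image, Finset.mem_range] at hv
    obtain ⟨i, hi, rfl⟩ := hv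
    have := UPR.bounds h (show i ≤ n by omega)
    exact Finset.mem_Icc.mpr this
  · intro v _ _
    exact (hw v).le

theorem UPR.le_LPP (hw : ∀ v, 0 < w v) {π : ℕ → ℤ × ℤ} {n : ℕ}
    (h : IsUpRightPathIn O π n p q) :
    pathWeight w π n ≤ LPPIn O w p q := by
  apply le_csSup
  · refine ⟨∑ v ∈ Finset.Icc p q, w v, ?_⟩
    rintro S ⟨σ, m, hσ, rfl⟩
    exact UPR.pathWeight_le_box hw hσ
  · exact ⟨π, n, h, rfl⟩

end LPP

section DoubleSplice

variable {O : Set (ℤ × ℤ)} {w : ℤ × ℤ → ℝ} {π ρ : ℕ → ℤ × ℤ} {n m : ℕ} {p q p' q' : ℤ × ℤ}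

theorem UPR.subp_path0 (h : IsUpRightPathIn O π n p q) {b : ℕ} (hb : b ≤ n) :
    IsUpRightPathIn O (UPR.subp π 0) b (π 0) (π b) := by
  have := UPR.subp_path h (Nat.zero_le b) hb
  rwa [Nat.sub_zero] at this

/-- Splicing the middle `[a1,b1]` segment of `π` into `ρ` (replacing `ρ`'s `[a2,b2]` part). -/
theorem UPR.splice (h1 : IsUpRightPathIn O π n p q) (h2 : IsUpRightPathIn O ρ m p' q')
    {a1 b1 a2 b2 : ℕ} (hab1 : a1 ≤ b1) (hb1 : b1 ≤ n) (hab2 : a2 ≤ b2) (hb2 : b2 ≤ m)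
    (hc : π a1 = ρ a2) (hd : π b1 = ρ b2) :
    ∃ σ, IsUpRightPathIn O σ (a2 + ((b1 - a1) + (m - b2))) p' q' ∧
      pathWeight w σ (a2 + ((b1 - a1) + (m - b2))) =
        pathWeight w (UPR.subp ρ 0) a2 + pathWeight w (UPR.subp π a1) (b1 - a1) +
          pathWeight w (UPR.subp ρ b2) (m - b2) ∧
      (∀ i, i < a2 → σ i = ρ i) ∧
      (∀ i, a2 ≤ i → i - a2 < b1 - a1 → σ i = π (a1 + (i - a2))) ∧
      (∀ i, a2 ≤ i → b1 - a1 ≤ i - a2 → σ i = ρ (b2 + (i - a2 - (b1 - a1)))) := by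
  classical
  set inner := UPR.cat (UPR.subp π a1) (UPR.subp ρ b2) (b1 - a1) with hinner
  set σ := UPR.cat (UPR.subp ρ 0) inner a2 with hσ
  refine ⟨σ, ?_, ?_, ?_, ?_, ?_⟩
  · -- path property
    have hmid : IsUpRightPathIn O (UPR.subp π a1) (b1 - a1) (ρ a2) (π b1) := by
      have := UPR.subp_path h1 hab1 hb1
      rwa [hc] at this
    have htail : IsUpRightPathIn O (UPR.subp ρ b2) (m - b2) (π b1) (ρ m) := by
      have := UPR.subp_path h2 hb2 le_rfl
      rwa [← hd] at this
    have hinner' : IsUpRightPathIn O inner ((b1 - a1) + (m - b2)) (ρ a2) (ρ m) :=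
      UPR.cat_path hmid htail
    have hhead : IsUpRightPathIn O (UPR.subp ρ 0) a2 (ρ 0) (ρ a2) :=
      UPR.subp_path0 h2 (by omega)
    have := UPR.cat_path hhead hinner'
    rwa [h2.1, h2.2.1] at this
  · -- weight
    rw [hσ, UPR.cat_weight, hinner, UPR.cat_weight]
    ring
  · intro i hi
    rw [hσ, UPR.cat_apply_lt hi, UPR.subp, Nat.zero_add]
  · intro i hi him
    rw [hσ, UPR.cat_apply_ge hi, hinner, UPR.cat_apply_lt him, UPR.subp]
  · intro i hi him
    rw [hσ, UPR.cat_apply_ge hi, hinner, UPR.cat_apply_ge him, UPR.subp]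

end DoubleSplice

theorem rightmost_geodesic_monotonicity (O : Set (ℤ × ℤ))
    (hO : O = Set.univ ∨ O = {v : ℤ × ℤ | v.2 ≤ v.1})
    (w : ℤ × ℤ → ℝ) (hw : ∀ v, 0 < w v)
    (x1 x2 w1 w2 y z : ℤ)
    (h1 : x1 ≤ w1 ∧ y ≤ z) (h2 : x2 ≤ w2 ∧ y ≤ z)
    (hx : x1 ≤ x2) (hw12 : w1 ≤ w2)
    (π1 π2 : ℕ → ℤ × ℤ) (n1 n2 : ℕ)
    (hπ1 : IsMaximizing O w π1 n1 (x1, y) (w1, z))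
    (hπ2 : IsMaximizing O w π2 n2 (x2, y) (w2, z))
    (hright1 : ∀ (σ : ℕ → ℤ × ℤ) (m : ℕ), IsMaximizing O w σ m (x1, y) (w1, z) →
      ∀ j : ℤ, leftmostAt σ m j ≤ leftmostAt π1 n1 j)
    (hright2 : ∀ (σ : ℕ → ℤ × ℤ) (m : ℕ), IsMaximizing O w σ m (x2, y) (w2, z) →
      ∀ j : ℤ, leftmostAt σ m j ≤ leftmostAt π2 n2 j) :
    ∀ j : ℤ, leftmostAt π1 n1 j ≤ leftmostAt π2 n2 j := by
  intro j
  have h1p := hπ1.1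
  have h2p := hπ2.1
  by_cases hvis1 : ∃ i ≤ n1, (π1 i).2 = j
  swap
  · rw [UPR.leftmostAt_eq_bot hvis1]; exact bot_le
  obtain ⟨i1, hi1, hj1⟩ := hvis1
  have hvis1' : ∃ i, i ≤ n1 ∧ (π1 i).2 = j := ⟨i1, hi1, hj1⟩
  have hyj : y ≤ j := by
    have := (UPR.snd_bounds h1p hi1).1; rw [hj1] at this; exact this
  have hjz : j ≤ z := by
    have := (UPR.snd_bounds h1p hi1).2; rw [hj1] at this; exact this
  have hvis2' : ∃ i, i ≤ n2 ∧ (π2 i).2 = j := UPR.visits h2p hyj hjz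
  rw [UPR.leftmostAt_eq h1p hvis1', UPR.leftmostAt_eq h2p hvis2']
  by_contra hcon
  push_neg at hcon
  have hlt : UPR.Lval π2 n2 j < UPR.Lval π1 n1 j := by exact_mod_cast hcon
  -- start values
  have hs1 : UPR.Lval π1 n1 y = x1 := UPR.Lval_start h1p
  have hs2 : UPR.Lval π2 n2 y = x2 := UPR.Lval_start h2p
  -- switch below
  obtain ⟨k, hky, hkj, hPk, hPk1⟩ :=
    UPR.exists_switch (fun t => UPR.Lval π1 n1 t ≤ UPR.Lval π2 n2 t) y j
      (show UPR.Lval π1 n1 y ≤ UPR.Lval π2 n2 y by rw [hs1, hs2]; exact hx)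
      (show ¬ (UPR.Lval π1 n1 j ≤ UPR.Lval π2 n2 j) by omega) hyj
  replace hPk : UPR.Lval π1 n1 k ≤ UPR.Lval π2 n2 k := hPk
  replace hPk1 : ¬ (UPR.Lval π1 n1 (k+1) ≤ UPR.Lval π2 n2 (k+1)) := hPk1
  push_neg at hPk1
  have hk1z : k + 1 ≤ z := by omega
  -- crossing point c below level j
  obtain ⟨hf2one, hc2⟩ := UPR.enter h2p (k := k) hky hk1z
  have hvis2k1 : ∃ i, i ≤ n2 ∧ (π2 i).2 = k + 1 := UPR.visits h2p (by omega) hk1z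
  have hf2n : UPR.firstIdx π2 n2 (k+1) ≤ n2 := (UPR.firstIdx_spec hvis2k1).1
  set a2 := UPR.firstIdx π2 n2 (k+1) - 1 with ha2def
  have ha2n : a2 ≤ n2 := by omega
  -- c on π1
  have hvis1k : ∃ i, i ≤ n1 ∧ (π1 i).2 = k := UPR.visits h1p hky (by omega)
  have hvis1k1 : ∃ i, i ≤ n1 ∧ (π1 i).2 = k + 1 := UPR.visits h1p (by omega) hk1z
  obtain ⟨hf1one, hc1⟩ := UPR.enter h1p (k := k) hky hk1z
  have hf1n : UPR.firstIdx π1 n1 (k+1) ≤ n1 := (UPR.firstIdx_spec hvis1k1).1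
  have hmem1k := UPR.Lval_mem (π := π1) hvis1k
  have hf1k_le : UPR.firstIdx π1 n1 k ≤ UPR.firstIdx π1 n1 (k+1) - 1 :=
    UPR.firstIdx_min hvis1k (by omega) (by rw [hc1])
  have hL2mono : UPR.Lval π2 n2 k ≤ UPR.Lval π2 n2 (k+1) := UPR.Lval_mono h2p hky hk1z
  have hxlo : (π1 (UPR.firstIdx π1 n1 k)).1 ≤ UPR.Lval π2 n2 (k+1) := by
    rw [hmem1k]; exact le_trans hPk hL2mono
  have hxhi : UPR.Lval π2 n2 (k+1) ≤ (π1 (UPR.firstIdx π1 n1 (k+1) - 1)).1 := by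
    rw [hc1]; exact hPk1.le
  have hlevc : (π1 (UPR.firstIdx π1 n1 k)).2 = (π1 (UPR.firstIdx π1 n1 (k+1) - 1)).2 := by
    rw [hmem1k, hc1]
  obtain ⟨a1, ha1n, ha1⟩ := UPR.fill h1p hf1k_le (by omega) hlevc hxlo hxhi
  have ha1' : π1 a1 = (UPR.Lval π2 n2 (k+1), k) := by rw [ha1, hmem1k]
  -- crossing point d at level ≥ j
  have habove : ∃ b1 b2 : ℕ, b1 ≤ n1 ∧ b2 ≤ n2 ∧ π2 b2 = π1 b1 ∧ j ≤ (π1 b1).2 := by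
    by_cases hQz : UPR.Lval π2 n2 z < UPR.Lval π1 n1 z
    · -- top-level crossing
      have hvis1z : ∃ i, i ≤ n1 ∧ (π1 i).2 = z := UPR.visits h1p (by omega) le_rfl
      have hvis2z : ∃ i, i ≤ n2 ∧ (π2 i).2 = z := UPR.visits h2p (by omega) le_rfl
      have hmem1z := UPR.Lval_mem (π := π1) hvis1z
      have hmem2z := UPR.Lval_mem (π := π2) hvis2z
      have hf1z := (UPR.firstIdx_spec hvis1z).1
      have hf2z := (UPR.firstIdx_spec hvis2z).1
      have hn2l : (π2 n2).2 = z := by rw [h2p.2.1]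
      have hL1w : UPR.Lval π1 n1 z ≤ w1 := by
        have hn1l : (π1 n1).2 = z := by rw [h1p.2.1]
        have := UPR.Lval_min h1p hvis1z le_rfl hn1l
        rw [h1p.2.1] at this; exact this
      have hlev2 : (π2 (UPR.firstIdx π2 n2 z)).2 = (π2 n2).2 := by rw [hmem2z, hn2l]
      have hlo : (π2 (UPR.firstIdx π2 n2 z)).1 ≤ UPR.Lval π1 n1 z := by
        rw [hmem2z]; exact hQz.le
      have hhi : UPR.Lval π1 n1 z ≤ (π2 n2).1 := by
        rw [h2p.2.1]; show UPR.Lval π1 n1 z ≤ w2; omega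
      obtain ⟨b2, hb2n, hb2⟩ := UPR.fill h2p hf2z le_rfl hlev2 hlo hhi
      refine ⟨UPR.firstIdx π1 n1 z, b2, hf1z, hb2n, ?_, ?_⟩
      · rw [hb2, hmem1z, hmem2z]
      · rw [hmem1z]; exact hjz
    · push_neg at hQz
      obtain ⟨m, hjm, hmz, hQm, hQm1⟩ :=
        UPR.exists_switch (fun t => UPR.Lval π2 n2 t < UPR.Lval π1 n1 t) j z hlt
          (show ¬ (UPR.Lval π2 n2 z < UPR.Lval π1 n1 z) by omega) hjz
      replace hQm : UPR.Lval π2 n2 m < UPR.Lval π1 n1 m := hQm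
      replace hQm1 : ¬ (UPR.Lval π2 n2 (m+1) < UPR.Lval π1 n1 (m+1)) := hQm1
      push_neg at hQm1
      have hym : y ≤ m := by omega
      have hm1z : m + 1 ≤ z := by omega
      obtain ⟨hf1one', hd1⟩ := UPR.enter h1p (k := m) hym hm1z
      have hvis1m1 : ∃ i, i ≤ n1 ∧ (π1 i).2 = m + 1 := UPR.visits h1p (by omega) hm1z
      have hf1m1n : UPR.firstIdx π1 n1 (m+1) ≤ n1 := (UPR.firstIdx_spec hvis1m1).1
      have hvis2m : ∃ i, i ≤ n2 ∧ (π2 i).2 = m := UPR.visits h2p hym (by omega)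
      have hvis2m1 : ∃ i, i ≤ n2 ∧ (π2 i).2 = m + 1 := UPR.visits h2p (by omega) hm1z
      obtain ⟨hf2one', hd2⟩ := UPR.enter h2p (k := m) hym hm1z
      have hmem2m := UPR.Lval_mem (π := π2) hvis2m
      have hf2m1n : UPR.firstIdx π2 n2 (m+1) ≤ n2 := (UPR.firstIdx_spec hvis2m1).1
      have horder : UPR.firstIdx π2 n2 m ≤ UPR.firstIdx π2 n2 (m+1) - 1 :=
        UPR.firstIdx_min hvis2m (by omega) (by rw [hd2])
      have hlev2 : (π2 (UPR.firstIdx π2 n2 m)).2 = (π2 (UPR.firstIdx π2 n2 (m+1) - 1)).2 := by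
        rw [hmem2m, hd2]
      have hL1mono : UPR.Lval π1 n1 m ≤ UPR.Lval π1 n1 (m+1) := UPR.Lval_mono h1p hym hm1z
      have hlo : (π2 (UPR.firstIdx π2 n2 m)).1 ≤ UPR.Lval π1 n1 (m+1) := by
        rw [hmem2m]; omega
      have hhi : UPR.Lval π1 n1 (m+1) ≤ (π2 (UPR.firstIdx π2 n2 (m+1) - 1)).1 := by
        rw [hd2]; exact hQm1
      obtain ⟨b2, hb2n, hb2⟩ := UPR.fill h2p horder (by omega) hlev2 hlo hhi
      refine ⟨UPR.firstIdx π1 n1 (m+1) - 1, b2, by omega, hb2n, ?_, ?_⟩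
      · rw [hb2, hd1, hmem2m]
      · rw [hd1]; exact hjm
  obtain ⟨b1, b2, hb1n, hb2n, hdd, hjd⟩ := habove
  -- index ordering
  have hca : (π1 a1).2 = k := by rw [ha1']
  have hc2k : (π2 a2).2 = k := by rw [hc2]
  have hab1 : a1 ≤ b1 := by
    by_contra hcn
    have := UPR.mono_snd h1p (show b1 ≤ a1 by omega) ha1n
    omega
  have hbb2 : (π2 b2).2 = (π1 b1).2 := by rw [hdd]
  have hab2 : a2 ≤ b2 := by
    by_contra hcn
    have := UPR.mono_snd h2p (show b2 ≤ a2 by omega) ha2n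
    omega
  -- splice
  have hcc : π1 a1 = π2 a2 := by rw [ha1', hc2]
  obtain ⟨σ, hσpath, hσw, hσ1f, hσ2f, hσ3f⟩ :=
    UPR.splice (w := w) h1p h2p hab1 hb1n hab2 hb2n hcc hdd.symm
  obtain ⟨τ, hτpath, hτw, _, _, _⟩ :=
    UPR.splice (w := w) h2p h1p hab2 hb2n hab1 hb1n hcc.symm hdd
  set N := a2 + ((b1 - a1) + (n2 - b2)) with hNdef
  -- weights
  have hW1 := UPR.weight_split (w := w) (π := π1) (n := n1) trivial hab1 hb1n
  have hW2 := UPR.weight_split (w := w) (π := π2) (n := n2) trivial hab2 hb2n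
  have hle1 : pathWeight w τ (a1 + ((b2 - a2) + (n1 - b1))) ≤ LPPIn O w (x1, y) (w1, z) :=
    UPR.le_LPP hw hτpath
  have hle2 : pathWeight w σ N ≤ LPPIn O w (x2, y) (w2, z) := UPR.le_LPP hw hσpath
  have hmax2 : pathWeight w σ N = LPPIn O w (x2, y) (w2, z) := by
    have e1 := hπ1.2
    have e2 := hπ2.2
    linarith
  have hσmax : IsMaximizing O w σ N (x2, y) (w2, z) := ⟨hσpath, hmax2⟩
  have hr := hright2 σ N hσmax j
  rw [UPR.leftmostAt_eq h2p hvis2'] at hr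
  have hσvis : ∃ i ≤ N, (σ i).2 = j := UPR.visits hσpath hyj hjz
  have hlow : ∀ i ≤ N, (σ i).2 = j → UPR.Lval π1 n1 j ≤ (σ i).1 := by
    intro i hiN hij
    rcases Nat.lt_or_ge i a2 with hia | hia
    · exfalso
      rw [hσ1f i hia] at hij
      have := UPR.mono_snd h2p (show i ≤ a2 by omega) ha2n
      omega
    · rcases Nat.lt_or_ge (i - a2) (b1 - a1) with him | him
      · rw [hσ2f i hia him] at hij ⊢
        exact UPR.Lval_min h1p hvis1' (show a1 + (i - a2) ≤ n1 by omega) hij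
      · rw [hσ3f i hia him] at hij ⊢
        have htn : b2 + (i - a2 - (b1 - a1)) ≤ n2 := by omega
        have hlev : (π2 b2).2 ≤ (π2 (b2 + (i - a2 - (b1 - a1)))).2 :=
          UPR.mono_snd h2p (by omega) htn
        have hb1j : (π1 b1).2 = j := by omega
        have hfirst : UPR.Lval π1 n1 j ≤ (π1 b1).1 := UPR.Lval_min h1p hvis1' hb1n hb1j
        have hsecond : (π2 b2).1 ≤ (π2 (b2 + (i - a2 - (b1 - a1)))).1 :=
          UPR.mono_fst h2p (by omega) htn
        have hbb1 : (π2 b2).1 = (π1 b1).1 := by rw [hdd]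
        omega
  have hfin1 := UPR.le_leftmostAt hσvis hlow
  have hfin : ((UPR.Lval π1 n1 j : ℝ) : EReal) ≤ ((UPR.Lval π2 n2 j : ℝ) : EReal) :=
    le_trans hfin1 hr
  have : UPR.Lval π1 n1 j ≤ UPR.Lval π2 n2 j := by exact_mod_cast hfin
  omega
end

section
/- Let d(a,b;c,e) = (sqrt(c-a+1) + sqrt(e-b+1))^2 for integers a ≤ c, b ≤ e. Then d satisfies superadditivity along the diagonal direction in the following sense: for (x1,y1) ≤ (i,i) ≤ (x2,y2) with x1 > y1 and x2 > y2, d(x1,y1;i,i) + d(i,i;x2,y2) ≤ 2(2i - x1 - y1 + 2) + 2(x2 + y2 - 2i + 2) - (x1-y1)^2/(2(2i-x1-y1+2)) - (x2-y2)^2/(2(x2+y2-2i+2)). -/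
lemma sqrt_sub_sq_le (A B : ℝ) (hA : 0 < A) (hB : B ^ 2 ≤ A ^ 2) :
    Real.sqrt (A ^ 2 - B ^ 2) ≤ A - B ^ 2 / (2 * A) := by
  have h0 : 0 ≤ A - B ^ 2 / (2 * A) := by
    rw [sub_nonneg, div_le_iff₀ (by linarith)]
    nlinarith
  have h1 : A ^ 2 - B ^ 2 ≤ (A - B ^ 2 / (2 * A)) ^ 2 := by
    have hA' : (2 * A) ≠ 0 := by positivity
    have ht : B ^ 2 / (2 * A) * (2 * A) = B ^ 2 := div_mul_cancel₀ _ (by positivity)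
    nlinarith [sq_nonneg (B ^ 2 / (2 * A))]
  calc Real.sqrt (A ^ 2 - B ^ 2) ≤ Real.sqrt ((A - B ^ 2 / (2 * A)) ^ 2) :=
        Real.sqrt_le_sqrt h1
    _ = A - B ^ 2 / (2 * A) := Real.sqrt_sq h0

lemma piece_bound (u v : ℝ) (hv : 0 < v) (hu : 0 < u) :
    (Real.sqrt u + Real.sqrt v) ^ 2 ≤ 2 * (u + v) - (u - v) ^ 2 / (2 * (u + v)) := by
  have huv : 0 < u + v := by linarith
  have key : Real.sqrt ((u + v) ^ 2 - (u - v) ^ 2) ≤ (u + v) - (u - v) ^ 2 / (2 * (u + v)) :=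
    sqrt_sub_sq_le _ _ huv (by nlinarith)
  have hexp : (Real.sqrt u + Real.sqrt v) ^ 2 = u + v + 2 * Real.sqrt (u * v) := by
    have hm : Real.sqrt u * Real.sqrt v = Real.sqrt (u * v) := (Real.sqrt_mul hu.le v).symm
    rw [add_sq, Real.sq_sqrt hu.le, Real.sq_sqrt hv.le, mul_assoc, hm]
    ring
  have h4 : Real.sqrt ((u + v) ^ 2 - (u - v) ^ 2) = 2 * Real.sqrt (u * v) := by
    have : (u + v) ^ 2 - (u - v) ^ 2 = 4 * (u * v) := by ring
    rw [this, show (4 : ℝ) * (u * v) = 2 ^ 2 * (u * v) by ring,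
      Real.sqrt_mul (by positivity), Real.sqrt_sq (by norm_num)]
  rw [hexp]
  rw [h4] at key
  linarith

theorem shapeFn_diag_two_piece_bound (x1 y1 i x2 y2 : ℤ)
    (hx1 : x1 ≤ i) (hy1 : y1 ≤ i) (hx2 : i ≤ x2) (hy2 : i ≤ y2)
    (h1 : y1 < x1) (h2 : y2 < x2) :
    shapeFn x1 y1 i i + shapeFn i i x2 y2 ≤
      2 * (2 * (i : ℝ) - x1 - y1 + 2) + 2 * ((x2 : ℝ) + y2 - 2 * i + 2) -
        ((x1 : ℝ) - y1) ^ 2 / (2 * (2 * (i : ℝ) - x1 - y1 + 2)) -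
        ((x2 : ℝ) - y2) ^ 2 / (2 * ((x2 : ℝ) + y2 - 2 * i + 2)) := by
  have hx1' : (x1 : ℝ) ≤ i := by exact_mod_cast hx1
  have hy1' : (y1 : ℝ) ≤ i := by exact_mod_cast hy1
  have hx2' : (i : ℝ) ≤ x2 := by exact_mod_cast hx2
  have hy2' : (i : ℝ) ≤ y2 := by exact_mod_cast hy2
  have hA := piece_bound ((i : ℝ) - x1 + 1) ((i : ℝ) - y1 + 1) (by linarith) (by linarith)
  have hB := piece_bound ((x2 : ℝ) - i + 1) ((y2 : ℝ) - i + 1) (by linarith) (by linarith)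
  unfold shapeFn
  have e1 : ((i : ℝ) - x1 + 1) + ((i : ℝ) - y1 + 1) = 2 * (i : ℝ) - x1 - y1 + 2 := by ring
  have e2 : ((i : ℝ) - x1 + 1) - ((i : ℝ) - y1 + 1) = -((x1 : ℝ) - y1) := by ring
  have e3 : ((x2 : ℝ) - i + 1) + ((y2 : ℝ) - i + 1) = (x2 : ℝ) + y2 - 2 * i + 2 := by ring
  have e4 : ((x2 : ℝ) - i + 1) - ((y2 : ℝ) - i + 1) = (x2 : ℝ) - y2 := by ring
  rw [e1, e2, neg_sq] at hA
  rw [e3, e4] at hB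
  linarith
end
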